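/- Let T be a rooted tree and H a spanning subgraph of the closure of T. Define B : V(T) → 2^{V(H)} by letting B(v) consist of v together with all vertices w ∈ V(H) such that w is a strict T-ancestor of v and wx ∈ E(H) for some T-descendant x of v. Then (T,B) is a tree decomposition of H. -/

import Mathlib

open Set

noncomputable section

/-- The Euclidean plane. -/
abbrev Plane : Type := EuclideanSpace ℝ (Fin 2)

/-- A topological graph: a simple graph whose vertices are distinct points of the plane and
whose edges are non-self-intersecting curves between the points of their endpoints, such that
no edge passes through a vertex other than its endpoints, each pair of edges intersects in a
finite number of points, and no three edges internally intersect at a common point.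
The curve of the edge between adjacent vertices `v` and `w` is `curve v w` restricted to
`[0,1]`, parametrised so that `curve v w t = curve w v (1 - t)`. -/
structure TopoGraph (V : Type) where
  /-- the underlying abstract simple graph -/
  G : SimpleGraph V
  /-- the position of each vertex in the plane -/
  pos : V → Plane
  pos_inj : Function.Injective pos
  /-- parametrised curves: `curve v w` on `[0,1]` is the edge from `v` to `w` (when adjacent) -/
  curve : V → V → ℝ → Plane
  curve_symm : ∀ v w t, curve v w t = curve w v (1 - t)
  curve_cont : ∀ v w, G.Adj v w → ContinuousOn (curve v w) (Set.Icc 0 1)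
  curve_injOn : ∀ v w, G.Adj v w → Set.InjOn (curve v w) (Set.Icc 0 1)
  curve_zero : ∀ v w, G.Adj v w → curve v w 0 = pos v
  curve_avoid : ∀ v w, G.Adj v w → ∀ t ∈ Set.Ioo (0:ℝ) 1, curve v w t ∉ Set.range pos
  finite_inter : ∀ v w x y, G.Adj v w → G.Adj x y → s(v, w) ≠ s(x, y) →
    ((curve v w '' Set.Icc 0 1) ∩ (curve x y '' Set.Icc 0 1)).Finite
  no_three : ∀ v₁ w₁ v₂ w₂ v₃ w₃, G.Adj v₁ w₁ → G.Adj v₂ w₂ → G.Adj v₃ w₃ →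
    s(v₁, w₁) ≠ s(v₂, w₂) → s(v₁, w₁) ≠ s(v₃, w₃) → s(v₂, w₂) ≠ s(v₃, w₃) →
    ∀ p : Plane,
      ¬(p ∈ curve v₁ w₁ '' Set.Ioo (0:ℝ) 1 ∧ p ∈ curve v₂ w₂ '' Set.Ioo (0:ℝ) 1 ∧
        p ∈ curve v₃ w₃ '' Set.Ioo (0:ℝ) 1)

namespace TopoGraph

variable {V : Type}

/-- The set of internal points of the edge `e`. -/
def intArc (X : TopoGraph V) (e : Sym2 V) : Set Plane :=
  {p | ∃ v w, e = s(v, w) ∧ p ∈ X.curve v w '' Set.Ioo (0:ℝ) 1}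

/-- The set of points of the edge `e` (including its endpoints). -/
def arcSet (X : TopoGraph V) (e : Sym2 V) : Set Plane :=
  {p | ∃ v w, e = s(v, w) ∧ p ∈ X.curve v w '' Set.Icc (0:ℝ) 1}

/-- Two edges cross if they have an internal intersection point. -/
def Crosses (X : TopoGraph V) (e f : Sym2 V) : Prop :=
  e ≠ f ∧ (X.intArc e ∩ X.intArc f).Nonempty

end TopoGraph

/-- A finite set of edges (elements of `Sym2 V`) is a matching if its members are pairwise
vertex-disjoint. -/
def PairwiseDisjointEdges {V : Type} (M : Finset (Sym2 V)) : Prop :=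
  (M : Set (Sym2 V)).Pairwise fun e f => ∀ v : V, ¬(v ∈ e ∧ v ∈ f)

namespace TopoGraph

variable {V : Type}

/-- `X` is `k`-matching-planar: for every edge `e`, every matching amongst the edges
crossing `e` has size at most `k`. -/
def MatchingPlanar (X : TopoGraph V) (k : ℕ) : Prop :=
  ∀ e ∈ X.G.edgeSet, ∀ M : Finset (Sym2 V),
    (∀ f ∈ M, f ∈ X.G.edgeSet ∧ X.Crosses f e) → PairwiseDisjointEdges M → M.card ≤ k

/-- `X` is `k`-cover-planar: for every edge `e`, the set of edges crossing `e` has a vertex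
cover of size at most `k`. -/
def CoverPlanar (X : TopoGraph V) (k : ℕ) : Prop :=
  ∀ e ∈ X.G.edgeSet, ∃ U : Finset V, U.card ≤ k ∧
    ∀ f ∈ X.G.edgeSet, X.Crosses f e → ∃ v ∈ U, v ∈ f

/-- No `t` edges of `X` incident to a common vertex pairwise cross. -/
def NoCrossingFan (X : TopoGraph V) (t : ℕ) : Prop :=
  ∀ v : V, ∀ S : Finset (Sym2 V),
    (∀ e ∈ S, e ∈ X.G.edgeSet ∧ v ∈ e) →
    ((S : Set (Sym2 V)).Pairwise X.Crosses) → S.card < t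

/-- An edge-colouring is transparent if no two edges of the same colour cross. -/
def Transparent (X : TopoGraph V) (φ : Sym2 V → ℕ) : Prop :=
  ∀ e ∈ X.G.edgeSet, ∀ f ∈ X.G.edgeSet, φ e = φ f → ¬X.Crosses e f

/-- An ordered `c`-edge-colouring: each edge receives a colour in `{1, …, c}`. -/
def IsOrderedColouring (X : TopoGraph V) (c : ℕ) (φ : Sym2 V → ℕ) : Prop :=
  ∀ e ∈ X.G.edgeSet, 1 ≤ φ e ∧ φ e ≤ c

/-- The topological thickness of `X` is at most `c`: there is a transparent
`c`-edge-colouring of `X`. -/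
def ThicknessAtMost (X : TopoGraph V) (c : ℕ) : Prop :=
  ∃ φ : Sym2 V → ℕ, (∀ e ∈ X.G.edgeSet, φ e < c) ∧ X.Transparent φ

/-- The parameters `t ∈ (0,1)` at which the edge from `v` to `w` is crossed by an edge
of strictly smaller colour. -/
def smallCrossParams (X : TopoGraph V) (φ : Sym2 V → ℕ) (v w : V) : Set ℝ :=
  {t | t ∈ Set.Ioo (0:ℝ) 1 ∧
    ∃ f ∈ X.G.edgeSet, φ f < φ s(v, w) ∧ X.curve v w t ∈ X.intArc f}

/-- `F` is a fragment of the edge from `v` to `w`: one of the subcurves into which the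
crossing points with the edges of smaller colour split the edge. -/
def IsFragment (X : TopoGraph V) (φ : Sym2 V → ℕ) (v w : V) (F : Set Plane) : Prop :=
  ∃ a b : ℝ, a < b ∧
    (a = 0 ∨ a ∈ X.smallCrossParams φ v w) ∧
    (b = 1 ∨ b ∈ X.smallCrossParams φ v w) ∧
    Set.Ioo a b ∩ X.smallCrossParams φ v w = ∅ ∧
    F = X.curve v w '' Set.Icc a b

/-- The edge `f` crosses the (sub)curve `F`. -/
def CrossesSet (X : TopoGraph V) (f : Sym2 V) (F : Set Plane) : Prop :=
  (F ∩ X.intArc f).Nonempty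

/-- The set of crossing points of the edge `e` with the edges of smaller colour. -/
def smallCrossPoints (X : TopoGraph V) (φ : Sym2 V → ℕ) (e : Sym2 V) : Set Plane :=
  {p | p ∈ X.intArc e ∧ ∃ f ∈ X.G.edgeSet, φ f < φ e ∧ p ∈ X.intArc f}

/-- A geometric graph: every edge is a straight line segment. -/
def IsGeometric (X : TopoGraph V) : Prop :=
  ∀ v w, X.G.Adj v w → X.curve v w '' Set.Icc 0 1 = segment ℝ (X.pos v) (X.pos w)

/-- A circular graph: a geometric graph whose vertices lie on a circle. -/
def IsCircular (X : TopoGraph V) : Prop :=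
  X.IsGeometric ∧ ∃ (o : Plane) (ρ : ℝ), 0 < ρ ∧ ∀ v : V, dist (X.pos v) o = ρ

/-- The crossing graph of `X`: vertices are the edges of `X`, two being adjacent iff
they cross. -/
def crossingGraph (X : TopoGraph V) : SimpleGraph X.G.edgeSet :=
  SimpleGraph.fromRel fun e f => X.Crosses e.1 f.1

end TopoGraph

noncomputable section

/-- `(T, B)` is a tree decomposition of `G`. -/
structure IsTreeDecomp {V ι : Type} (G : SimpleGraph V) (T : SimpleGraph ι)
    (B : ι → Set V) : Prop where
  isTree : T.IsTree
  edges_covered : ∀ ⦃v w : V⦄, G.Adj v w → ∃ i, v ∈ B i ∧ w ∈ B i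
  verts_covered : ∀ v : V, ∃ i, v ∈ B i
  bags_connected : ∀ v : V, (T.induce {i | v ∈ B i}).Connected

/-- The treewidth of `G` is at most `w`: `G` has a tree decomposition of width at most `w`. -/
def TreewidthAtMost {V : Type} (G : SimpleGraph V) (w : ℕ) : Prop :=
  ∃ (ι : Type) (T : SimpleGraph ι) (B : ι → Set V),
    IsTreeDecomp G T B ∧ ∀ i, (B i).encard ≤ (w : ℕ∞) + 1

/-- A layering of `G`: every edge joins two vertices in the same or consecutive layers. -/
def IsLayering {V : Type} (G : SimpleGraph V) (L : V → ℕ) : Prop :=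
  ∀ ⦃v w : V⦄, G.Adj v w → L v ≤ L w + 1 ∧ L w ≤ L v + 1

/-- The layered treewidth of `G` is at most `ℓ`. -/
def LayeredTreewidthAtMost {V : Type} (G : SimpleGraph V) (ℓ : ℕ) : Prop :=
  ∃ (ι : Type) (T : SimpleGraph ι) (B : ι → Set V) (L : V → ℕ),
    IsTreeDecomp G T B ∧ IsLayering G L ∧
    ∀ i n, (B i ∩ {v | L v = n}).encard ≤ (ℓ : ℕ∞)

/-- The layered treewidth of `G`: the minimum, over all tree decompositions of `G` and all
layerings of `G`, of the maximum number of vertices in the intersection of a bag and a layer. -/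
noncomputable def layeredTreewidth {V : Type} (G : SimpleGraph V) : ℕ∞ :=
  sInf {ℓ : ℕ∞ | ∃ (ι : Type) (T : SimpleGraph ι) (B : ι → Set V) (L : V → ℕ),
    IsTreeDecomp G T B ∧ IsLayering G L ∧ ∀ i n, (B i ∩ {v | L v = n}).encard ≤ ℓ}

/-- The strong product of two simple graphs. -/
def StrongProd {α β : Type} (G : SimpleGraph α) (H : SimpleGraph β) :
    SimpleGraph (α × β) where
  Adj x y := x ≠ y ∧ (x.1 = y.1 ∨ G.Adj x.1 y.1) ∧ (x.2 = y.2 ∨ H.Adj x.2 y.2)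
  symm := by
    refine ⟨?_⟩
    rintro x y ⟨hne, h1, h2⟩
    exact ⟨hne.symm, h1.imp Eq.symm SimpleGraph.Adj.symm, h2.imp Eq.symm SimpleGraph.Adj.symm⟩
  loopless := ⟨fun x h => h.1 rfl⟩

/-- The row treewidth of `G` is at most `w`: `G` is isomorphic to a subgraph of `H ⊠ P` for
some graph `H` of treewidth at most `w` and some path `P`. -/
def RowTreewidthAtMost {V : Type} (G : SimpleGraph V) (w : ℕ) : Prop :=
  ∃ (ι : Type) (H : SimpleGraph ι) (n : ℕ) (f : V → ι × Fin n),
    TreewidthAtMost H w ∧ Function.Injective f ∧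
    ∀ ⦃v u : V⦄, G.Adj v u → (StrongProd H (SimpleGraph.pathGraph n)).Adj (f v) (f u)

/-- `μ` is a model of `G` in `H`. -/
def IsMinorModel {α V : Type} (G : SimpleGraph α) (H : SimpleGraph V)
    (μ : α → Set V) : Prop :=
  (∀ a, (μ a).Nonempty) ∧ (∀ a, (H.induce (μ a)).Connected) ∧
  (∀ ⦃a b : α⦄, a ≠ b → Disjoint (μ a) (μ b)) ∧
  (∀ ⦃a b : α⦄, G.Adj a b → ∃ x ∈ μ a, ∃ y ∈ μ b, H.Adj x y)

/-- `G` is a weak `r`-shallow minor of `H`: there is a model of `G` in `H` each of whose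
branch sets has weak radius at most `r` in `H`. -/
def WeakShallowMinor {α V : Type} (G : SimpleGraph α) (H : SimpleGraph V) (r : ℕ) : Prop :=
  ∃ μ : α → Set V, IsMinorModel G H μ ∧
    ∀ a, ∃ h : V, ∀ x ∈ μ a, ∃ p : H.Walk h x, p.length ≤ r

/-- The subgraph of `G` on the vertex set `S` has radius at most `r`. -/
def RadiusAtMostOn {V : Type} (G : SimpleGraph V) (S : Set V) (r : ℕ) : Prop :=
  ∃ y : S, ∀ x : S, ∃ p : (G.induce S).Walk y x, p.length ≤ r

/-- An apex-forest: deleting at most one vertex leaves a forest. -/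
def IsApexForest {V : Type} (J : SimpleGraph V) : Prop :=
  ∃ A : Set V, A.Subsingleton ∧ (J.induce Aᶜ).IsAcyclic

/-- In the tree `T` rooted at `root`, `a` is a `T`-ancestor of `x`, i.e. `a` lies on the
path in `T` from `root` to `x`. (Every node is an ancestor of itself.) -/
def IsAncestor {ι : Type} (T : SimpleGraph ι) (root : ι) (a x : ι) : Prop :=
  ∀ p : T.Walk root x, p.IsPath → a ∈ p.support

/-- The closure of the tree `T` rooted at `root`: two distinct nodes are adjacent iff one
is a (strict) `T`-ancestor of the other. -/
def treeClosure {ι : Type} (T : SimpleGraph ι) (root : ι) : SimpleGraph ι :=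
  SimpleGraph.fromRel fun a x => IsAncestor T root a x

/-- The set `S` induces a non-empty path in `J`. -/
def InducesNonemptyPath {α : Type} (J : SimpleGraph α) (S : Set α) : Prop :=
  ∃ m : ℕ, 1 ≤ m ∧ Nonempty ((J.induce S) ≃g SimpleGraph.pathGraph m)

/-- `J` is `(t,y)`-good: there is a graph `H` of treewidth at most `t` and a path `P` such
that a subgraph `J'` of `H ⊠ P` is isomorphic to `J` and, for all but at most `y` vertices
`v` of `H`, the set `({v} × V(P)) ∩ V(J')` induces a non-empty path of `J'`. -/
def IsGood {α : Type} (J : SimpleGraph α) (t y : ℕ) : Prop :=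
  ∃ (ι : Type) (H : SimpleGraph ι) (n : ℕ) (f : α → ι × Fin n),
    TreewidthAtMost H t ∧ Function.Injective f ∧
    (∀ ⦃u v : α⦄, J.Adj u v → (StrongProd H (SimpleGraph.pathGraph n)).Adj (f u) (f v)) ∧
    {v : ι | ¬InducesNonemptyPath J {a : α | (f a).1 = v}}.encard ≤ (y : ℕ∞)

/-- A star: `K₁` or `K_{1,t}` for some `t ≥ 1`. -/
def IsStarGraph {V : Type} (G : SimpleGraph V) : Prop :=
  ∃ c : V, (∀ v : V, v ≠ c → G.Adj c v) ∧ ∀ ⦃v w : V⦄, G.Adj v w → v = c ∨ w = c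

/-- A star-forest: a forest each of whose components is a star. -/
def IsStarForest {V : Type} (G : SimpleGraph V) : Prop :=
  G.IsAcyclic ∧ ∀ a b c d : V, G.Adj a b → G.Adj b c → G.Adj c d → a = c ∨ b = d

/-- The arboricity of `G` is at most `a`: `G` is the union of `a` edge-disjoint forests. -/
def ArboricityAtMost {V : Type} (G : SimpleGraph V) (a : ℕ) : Prop :=
  ∃ φ : Sym2 V → ℕ, (∀ e ∈ G.edgeSet, φ e < a) ∧
    ∀ i : ℕ, (SimpleGraph.fromEdgeSet {e | e ∈ G.edgeSet ∧ φ e = i}).IsAcyclic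

/-- The star arboricity of `G` is at most `a`: `G` is the union of `a` edge-disjoint
star-forests. -/
def StarArboricityAtMost {V : Type} (G : SimpleGraph V) (a : ℕ) : Prop :=
  ∃ φ : Sym2 V → ℕ, (∀ e ∈ G.edgeSet, φ e < a) ∧
    ∀ i : ℕ, IsStarForest (SimpleGraph.fromEdgeSet {e | e ∈ G.edgeSet ∧ φ e = i})

/-- `G` is an outerstring graph: the intersection graph of a collection of curves in the
closed upper half-plane, each having exactly one point on the boundary line, which is an
endpoint of the curve. -/
def IsOuterstring {V : Type} (G : SimpleGraph V) : Prop :=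
  ∃ γ : V → ℝ → Plane,
    (∀ v, ContinuousOn (γ v) (Set.Icc 0 1)) ∧
    (∀ v, ∀ t ∈ Set.Icc (0:ℝ) 1, 0 ≤ γ v t 1) ∧
    (∀ v, γ v 0 1 = 0) ∧
    (∀ v, ∀ t ∈ Set.Ioc (0:ℝ) 1, γ v t 1 ≠ 0) ∧
    ∀ v w : V, G.Adj v w ↔ v ≠ w ∧ (γ v '' Set.Icc 0 1 ∩ γ w '' Set.Icc 0 1).Nonempty

section EulerGenus

/-- The setoid on `α` whose classes are the orbits of a set `S` of permutations of `α`. -/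
def permOrbitSetoid {α : Type} (S : Set (Equiv.Perm α)) : Setoid α :=
  Relation.EqvGen.setoid fun a b => ∃ π ∈ S, π a = b

/-- A combinatorial map (graph-encoded map): a finite set of flags together with three
fixed-point-free involutions `σ₀, σ₁, σ₂` such that `σ₀σ₂ = σ₂σ₀` is fixed-point free.
These encode exactly the cellular embeddings of graphs in closed surfaces. -/
structure CombMap : Type 1 where
  flags : Type
  fin : Finite flags
  σ₀ : Equiv.Perm flags
  σ₁ : Equiv.Perm flags
  σ₂ : Equiv.Perm flags
  inv₀ : ∀ f, σ₀ (σ₀ f) = f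
  inv₁ : ∀ f, σ₁ (σ₁ f) = f
  inv₂ : ∀ f, σ₂ (σ₂ f) = f
  nf₀ : ∀ f, σ₀ f ≠ f
  nf₁ : ∀ f, σ₁ f ≠ f
  nf₂ : ∀ f, σ₂ f ≠ f
  comm₀₂ : ∀ f, σ₀ (σ₂ f) = σ₂ (σ₀ f)
  nf₀₂ : ∀ f, σ₀ (σ₂ f) ≠ f

namespace CombMap

/-- The vertices of the map: the orbits of `⟨σ₁, σ₂⟩` on flags. -/
def Verts (M : CombMap) : Type := Quotient (permOrbitSetoid {M.σ₁, M.σ₂})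

/-- The number of vertices of the map. -/
noncomputable def numV (M : CombMap) : ℕ := Nat.card M.Verts

/-- The number of edges of the map: the number of orbits of `⟨σ₀, σ₂⟩` on flags. -/
noncomputable def numE (M : CombMap) : ℕ :=
  Nat.card (Quotient (permOrbitSetoid {M.σ₀, M.σ₂}))

/-- The number of faces of the map: the number of orbits of `⟨σ₀, σ₁⟩` on flags. -/
noncomputable def numF (M : CombMap) : ℕ :=
  Nat.card (Quotient (permOrbitSetoid {M.σ₀, M.σ₁}))

/-- The number of connected components of the map. -/
noncomputable def numC (M : CombMap) : ℕ :=
  Nat.card (Quotient (permOrbitSetoid {M.σ₀, M.σ₁, M.σ₂}))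

/-- The Euler genus `2c - (V - E + F)` of the map is at most `g`. -/
def EulerGenusAtMost (M : CombMap) (g : ℕ) : Prop :=
  2 * (M.numC : ℤ) - ((M.numV : ℤ) - (M.numE : ℤ) + (M.numF : ℤ)) ≤ (g : ℤ)

/-- The graph of the map: two distinct vertices are adjacent iff some edge-orbit contains a
flag of each. -/
def graph (M : CombMap) : SimpleGraph M.Verts :=
  SimpleGraph.fromRel fun u v => ∃ a b : M.flags,
    Quotient.mk (permOrbitSetoid {M.σ₁, M.σ₂}) a = u ∧
    Quotient.mk (permOrbitSetoid {M.σ₁, M.σ₂}) b = v ∧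
    (permOrbitSetoid {M.σ₀, M.σ₂}).r a b

end CombMap

/-- The Euler genus of `H` is at most `g`: `H` embeds in a closed surface of Euler genus at
most `g`, i.e. `H` is isomorphic to a subgraph of the graph of a combinatorial map of Euler
genus at most `g`. -/
def EulerGenusAtMost {ι : Type} (H : SimpleGraph ι) (g : ℕ) : Prop :=
  ∃ M : CombMap, M.EulerGenusAtMost g ∧
    ∃ φ : ι → M.Verts, Function.Injective φ ∧
      ∀ ⦃u v : ι⦄, H.Adj u v → M.graph.Adj (φ u) (φ v)

/-- The Euler genus of a graph: the minimum Euler genus of a surface in which it embeds. -/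
noncomputable def eulerGenus {ι : Type} (H : SimpleGraph ι) : ℕ∞ :=
  sInf {n : ℕ∞ | ∃ g : ℕ, n = (g : ℕ∞) ∧ EulerGenusAtMost H g}

end EulerGenus

section Helpers

open SimpleGraph

private lemma isAncestor_refl' {ι : Type} (T : SimpleGraph ι) (root x : ι) :
    IsAncestor T root x x := fun p _ => p.end_mem_support

private lemma isAncestor_trans' {ι : Type} {T : SimpleGraph ι} {root a b c : ι}
    (hab : IsAncestor T root a b) (hbc : IsAncestor T root b c) :
    IsAncestor T root a c := by
  classical
  intro p hp
  have hb := hbc p hp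
  exact p.support_takeUntil_subset hb (hab (p.takeUntil b hb) (hp.takeUntil hb))

private lemma isAncestor_iff' {ι : Type} {T : SimpleGraph ι} (hT : T.IsTree) {root a i : ι}
    (p : T.Walk root i) (hp : p.IsPath) : IsAncestor T root a i ↔ a ∈ p.support := by
  constructor
  · exact fun h => h p hp
  · intro ha q hq
    obtain rfl : q = p := (hT.existsUnique_path root i).unique hq hp
    exact ha

private lemma isAncestor_of_mem_dropUntil' {ι : Type} [DecidableEq ι] {T : SimpleGraph ι}
    (hT : T.IsTree)
    {root i v j : ι} (p : T.Walk root i) (hp : p.IsPath) (hv : v ∈ p.support)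
    (hj : j ∈ (p.dropUntil v hv).support) : IsAncestor T root v j := by
  set r := p.dropUntil v hv with hr
  have hqp : ((p.takeUntil v hv).append (r.takeUntil j hj)).IsPath := by
    rw [SimpleGraph.Walk.isPath_def, SimpleGraph.Walk.support_append]
    have hps : p.support = (p.takeUntil v hv).support ++ r.support.tail := by
      conv_lhs => rw [← p.take_spec hv]
      rw [SimpleGraph.Walk.support_append]
    have hrs : r.support.tail
        = (r.takeUntil j hj).support.tail ++ (r.dropUntil j hj).support.tail := by
      conv_lhs => rw [← r.take_spec hj]
      rw [SimpleGraph.Walk.tail_support_append]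
    have hnd : (((p.takeUntil v hv).support ++ (r.takeUntil j hj).support.tail)
        ++ (r.dropUntil j hj).support.tail).Nodup := by
      have h := hp.support_nodup
      rwa [hps, hrs, ← List.append_assoc] at h
    exact hnd.of_append_left
  intro w hw
  obtain rfl : w = (p.takeUntil v hv).append (r.takeUntil j hj) :=
    (hT.existsUnique_path root j).unique hw hqp
  rw [SimpleGraph.Walk.mem_support_append_iff]
  exact Or.inl (SimpleGraph.Walk.end_mem_support _)

private lemma reachable_induce_of_support' {ι : Type} {T : SimpleGraph ι} {S : Set ι}
    {a b : ι} (w : T.Walk a b) :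
    (∀ x ∈ w.support, x ∈ S) → ∀ (ha : a ∈ S) (hb : b ∈ S),
      (T.induce S).Reachable ⟨a, ha⟩ ⟨b, hb⟩ := by
  induction w with
  | nil => exact fun _ _ _ => SimpleGraph.Reachable.refl _
  | @cons u c d h w ih =>
    intro hs ha hb
    have hc : c ∈ S := hs c (by simp)
    have step : (T.induce S).Adj ⟨u, ha⟩ ⟨c, hc⟩ := h
    exact step.reachable.trans (ih (fun x hx => hs x (by simp [hx])) hc hb)

end Helpers

/-- Let `T` be a rooted tree and `H` a spanning subgraph of the closure
of `T`. Define `B : V(T) → 2^{V(H)}` by letting `B(v)` consist of `v` together with all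
vertices `w ∈ V(H)` such that `w` is a strict `T`-ancestor of `v` and `wx ∈ E(H)` for some
`T`-descendant `x` of `v`. Then `(T,B)` is a tree decomposition of `H`. -/
theorem treeDecomp_of_closure_subgraph (ι : Type) (T : SimpleGraph ι) (root : ι)
    (hT : T.IsTree) (H : SimpleGraph ι) (hH : H ≤ treeClosure T root)
    (B : ι → Set ι)
    (hB : ∀ v : ι, B v =
      insert v {w : ι | (IsAncestor T root w v ∧ w ≠ v) ∧
        ∃ x : ι, IsAncestor T root v x ∧ H.Adj w x}) :
    IsTreeDecomp H T B := by
  classical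
  have href : ∀ x : ι, IsAncestor T root x x := fun x => isAncestor_refl' T root x
  have hvS : ∀ v : ι, v ∈ B v := fun v => by rw [hB v]; exact Set.mem_insert _ _
  refine ⟨hT, ?_, ?_, ?_⟩
  · intro v w hvw
    have h := hH hvw
    rw [treeClosure, SimpleGraph.fromRel_adj] at h
    obtain ⟨hne, h | h⟩ := h
    · refine ⟨w, ?_, hvS w⟩
      rw [hB w]
      exact Set.mem_insert_iff.2 (Or.inr ⟨⟨h, hne⟩, w, href w, hvw⟩)
    · refine ⟨v, hvS v, ?_⟩
      rw [hB v]
      exact Set.mem_insert_iff.2 (Or.inr ⟨⟨h, hne.symm⟩, v, href v, hvw.symm⟩)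
  · exact fun v => ⟨v, hvS v⟩
  · intro v
    have hvmem : v ∈ {i : ι | v ∈ B i} := hvS v
    have key : ∀ i (hi : v ∈ B i),
        (T.induce {i : ι | v ∈ B i}).Reachable ⟨i, hi⟩ ⟨v, hvmem⟩ := by
      intro i hi
      have hi' := hi
      rw [hB i, Set.mem_insert_iff] at hi'
      rcases hi' with rfl | ⟨⟨hanc, hne⟩, x, hix, hadj⟩
      · exact SimpleGraph.Reachable.refl _
      · obtain ⟨p, hp, -⟩ := hT.existsUnique_path root i
        have hv : v ∈ p.support := hanc p hp
        have hall : ∀ j ∈ (p.dropUntil v hv).support, j ∈ {i : ι | v ∈ B i} := by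
          intro j hj
          show v ∈ B j
          rw [hB j, Set.mem_insert_iff]
          by_cases hjv : v = j
          · exact Or.inl hjv
          · refine Or.inr ⟨⟨isAncestor_of_mem_dropUntil' hT p hp hv hj, hjv⟩, x, ?_, hadj⟩
            have hji : IsAncestor T root j i :=
              (isAncestor_iff' hT p hp).2 (p.support_dropUntil_subset hv hj)
            exact isAncestor_trans' hji hix
        have := reachable_induce_of_support' (p.dropUntil v hv) hall hvmem hi
        exact this.symm
    haveI : Nonempty ↑{i : ι | v ∈ B i} := ⟨⟨v, hvmem⟩⟩
    refine ⟨fun a b => ?_⟩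
    obtain ⟨i, hi⟩ := a
    obtain ⟨j, hj⟩ := b
    exact (key i hi).trans (key j hj).symm
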